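/- arXiv:1710.01572 — 7 statements merged into one kernel-verified Lean document; each statement's English description precedes it below -/
import Mathlib

section
/- Let p be a prime, λ > 0 an integer, and y an integer with y > 0 or y < 1 - λ. Then λ/(p-1) - ⌈log_p(λ)⌉ - 1 ≤ Σ_{i=0}^{λ-1} v_p(y+i) ≤ (λ-1)/(p-1) + max{⌊log_p|y|⌋, ⌊log_p|y+λ-1|⌋}, where v_p denotes the p-adic valuation. -/
/-!
Legendre-style counting: if `c j` is the number of multiples of `p ^ j` among the `L` consecutive
integers `y, …, y + L - 1`, then `∑ i, min (v_p (y + i)) J = ∑_{j = 1}^{J} c j`, and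
`L / p ^ j - 1 ≤ c j ≤ (L - 1) / p ^ j + 1`. Summing these bounds gives geometric series. For the
lower bound truncate at `K = ⌈log_p L⌉`, where `L ≤ p ^ K`; for the upper bound take
`J = max ⌊log_p |y|⌋ ⌊log_p |y + L - 1|⌋`, which dominates every `v_p (y + i)` because
`p ^ v_p(n) ≤ |n|` and `|y + i|` is largest at an endpoint.
-/

open Finset

lemma card_range_filter_dvd_add_eq_card_Ioc (m y : ℤ) (L : ℕ) :
    #{i ∈ range L | m ∣ y + (i : ℕ)} = #{x ∈ Ioc (y - 1) (y + L - 1) | m ∣ x} := by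
  refine card_nbij' (fun i => y + i) (fun x => (x - y).toNat) ?_ ?_ ?_ ?_ <;>
    intro a ha <;> simp only [coe_filter, Set.mem_ofPred_eq, mem_range, mem_Ioc] at ha ⊢ <;> grind

lemma card_range_filter_dvd_add_eq_ediv_sub_ediv {m : ℕ} (hm : 0 < m) (y : ℤ) (L : ℕ) :
    (#{i ∈ range L | (m : ℤ) ∣ y + (i : ℕ)} : ℤ) = (y + L - 1) / m - (y - 1) / m := by
  have hm' : (0 : ℤ) < m := by exact_mod_cast hm
  rw [card_range_filter_dvd_add_eq_card_Ioc, Int.Ioc_filter_dvd_card _ _ hm', Int.cast_natCast,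
    Rat.floor_intCast_div_natCast, Rat.floor_intCast_div_natCast]
  exact max_eq_left (sub_nonneg.2 (Int.ediv_le_ediv hm' (by omega)))

lemma card_range_filter_dvd_add_bounds {m : ℕ} (hm : 0 < m) (y : ℤ) (L : ℕ) :
    (L : ℝ) / m - 1 ≤ #{i ∈ range L | (m : ℤ) ∣ y + (i : ℕ)} ∧
      (#{i ∈ range L | (m : ℤ) ∣ y + (i : ℕ)} : ℝ) ≤ ((L : ℝ) - 1) / m + 1 := by
  set c := #{i ∈ range L | (m : ℤ) ∣ y + (i : ℕ)}
  have hm' : (0 : ℤ) < m := by exact_mod_cast hm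
  have hc := card_range_filter_dvd_add_eq_ediv_sub_ediv hm y L
  have ha := Int.mul_ediv_add_emod (y - 1) m
  have hb := Int.mul_ediv_add_emod (y + L - 1) m
  have ha₀ := Int.emod_nonneg (y - 1) hm'.ne'
  have ha₁ := Int.emod_lt_of_pos (y - 1) hm'
  have hb₀ := Int.emod_nonneg (y + L - 1) hm'.ne'
  have hb₁ := Int.emod_lt_of_pos (y + L - 1) hm'
  have hlow : (L : ℤ) ≤ (c + 1) * m := by rw [add_mul, hc, sub_mul]; linarith
  have hup : ((c : ℤ) - 1) * m ≤ L - 1 := by rw [sub_mul, hc, sub_mul]; linarith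
  have hmR : (0 : ℝ) < m := by exact_mod_cast hm
  constructor
  · rw [sub_le_iff_le_add, div_le_iff₀ hmR]
    exact_mod_cast hlow
  · rw [← sub_le_iff_le_add, le_div_iff₀ hmR]
    exact_mod_cast hup

lemma card_filter_pow_dvd_eq_min_padicValInt {p : ℕ} [Fact p.Prime] {n : ℤ} (hn : n ≠ 0)
    (J : ℕ) : #{j ∈ Icc 1 J | (p : ℤ) ^ j ∣ n} = min (padicValInt p n) J := by
  have : {j ∈ Icc 1 J | (p : ℤ) ^ j ∣ n} = Icc 1 (min (padicValInt p n) J) := by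
    ext j
    simp only [mem_filter, mem_Icc, padicValInt_dvd_iff, hn, false_or]
    omega
  simp [this]

lemma sum_min_padicValInt_eq_sum_card {p : ℕ} [Fact p.Prime] {ι : Type*} (s : Finset ι)
    {f : ι → ℤ} (hf : ∀ i ∈ s, f i ≠ 0) (J : ℕ) :
    ∑ i ∈ s, min (padicValInt p (f i)) J = ∑ j ∈ Icc 1 J, #{i ∈ s | (p : ℤ) ^ j ∣ f i} := by
  rw [sum_congr rfl fun i hi => (card_filter_pow_dvd_eq_min_padicValInt (hf i hi) J).symm]
  simp only [card_filter]
  exact sum_comm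

lemma padicValInt_le_max_log_natAbs (p : ℕ) {a b n : ℤ} (ha : a ≤ n) (hb : n ≤ b) :
    padicValInt p n ≤ max (Nat.log p a.natAbs) (Nat.log p b.natAbs) :=
  calc padicValInt p n ≤ Nat.log p n.natAbs := padicValNat_le_nat_log _
    _ ≤ Nat.log p (max a.natAbs b.natAbs) := Nat.log_mono_right (by omega)
    _ = max (Nat.log p a.natAbs) (Nat.log p b.natAbs) := Nat.log_monotone.map_max

lemma Real.floor_logb_abs_intCast (b : ℕ) (n : ℤ) :
    ⌊Real.logb b |(n : ℝ)|⌋ = Nat.log b n.natAbs := by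
  rw [← Int.cast_abs, ← Nat.cast_natAbs, Real.floor_logb_natCast (by positivity), Int.log_natCast]

lemma sum_Icc_inv_pow {K : Type*} [Field K] {q : K} (hq0 : q ≠ 0) (hq1 : q ≠ 1) (n : ℕ) :
    ∑ j ∈ Icc 1 n, (q ^ j)⁻¹ = (1 - (q ^ n)⁻¹) / (q - 1) := by
  have : q - 1 ≠ 0 := sub_ne_zero.mpr hq1
  induction n with
  | zero => simp
  | succ n ih =>
    rw [sum_Icc_succ_top (by omega), ih]
    field_simp
    ring

lemma le_sum_Icc_of_div_pow_sub_one_le {q L : ℝ} (hq : 2 ≤ q) {K : ℕ} (hLK : L ≤ q ^ K)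
    {c : ℕ → ℝ} (hc : ∀ j, L / q ^ j - 1 ≤ c j) :
    L / (q - 1) - K - 1 ≤ ∑ j ∈ Icc 1 K, c j := by
  have hgeom := sum_Icc_inv_pow (by positivity : q ≠ 0) (by linarith : q ≠ 1) K
  have hLK' : L * (q ^ K)⁻¹ / (q - 1) ≤ 1 := by
    rw [← div_eq_mul_inv]
    exact div_le_one_of_le₀ (((div_le_one (by positivity)).2 hLK).trans (by linarith)) (by linarith)
  calc L / (q - 1) - K - 1 ≤ L / (q - 1) - L * (q ^ K)⁻¹ / (q - 1) - K := by linarith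
    _ = ∑ j ∈ Icc 1 K, (L / q ^ j - 1) := by
      simp only [sum_sub_distrib, div_eq_mul_inv, ← mul_sum, hgeom, sum_const, Nat.card_Icc,
        add_tsub_cancel_right, nsmul_eq_mul, mul_one]
      ring
    _ ≤ ∑ j ∈ Icc 1 K, c j := sum_le_sum fun j _ => hc j

lemma sum_Icc_le_of_le_div_pow_add_one {q L : ℝ} (hq : 1 < q) (hL : 0 ≤ L) {c : ℕ → ℝ}
    (hc : ∀ j, c j ≤ L / q ^ j + 1) (J : ℕ) :
    ∑ j ∈ Icc 1 J, c j ≤ L / (q - 1) + J := by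
  have hgeom := sum_Icc_inv_pow (by positivity : q ≠ 0) hq.ne' J
  calc ∑ j ∈ Icc 1 J, c j ≤ ∑ j ∈ Icc 1 J, (L / q ^ j + 1) := sum_le_sum fun j _ => hc j
    _ = L / (q - 1) - L * (q ^ J)⁻¹ / (q - 1) + J := by
      simp only [sum_add_distrib, div_eq_mul_inv, ← mul_sum, hgeom, sum_const, Nat.card_Icc,
        add_tsub_cancel_right, nsmul_eq_mul, mul_one]
      ring
    _ ≤ L / (q - 1) + J := by
      have : 0 ≤ L * (q ^ J)⁻¹ / (q - 1) := by
        have : 0 < q - 1 := by linarith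
        positivity
      linarith

section ConsecutiveIntegers

variable {p : ℕ} [Fact p.Prime] {y : ℤ} {L : ℕ}

theorem le_sum_padicValInt_add (hy : ∀ i < L, y + i ≠ 0) :
    (L : ℝ) / (p - 1) - Nat.clog p L - 1 ≤ ∑ i ∈ range L, (padicValInt p (y + i) : ℝ) := by
  obtain hp : p.Prime := Fact.out
  set K := Nat.clog p L
  calc (L : ℝ) / (p - 1) - K - 1
        ≤ ∑ j ∈ Icc 1 K, (#{i ∈ range L | (p : ℤ) ^ j ∣ y + (i : ℕ)} : ℝ) := by
        refine le_sum_Icc_of_div_pow_sub_one_le (by exact_mod_cast hp.two_le) ?_ fun j => ?_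
        · exact_mod_cast Nat.le_pow_clog hp.one_lt L
        · simpa using (card_range_filter_dvd_add_bounds (pow_pos hp.pos j) y L).1
    _ = ∑ i ∈ range L, ((min (padicValInt p (y + i)) K : ℕ) : ℝ) := by
        exact_mod_cast (sum_min_padicValInt_eq_sum_card _ (fun i hi => hy i (mem_range.1 hi)) K).symm
    _ ≤ ∑ i ∈ range L, (padicValInt p (y + i) : ℝ) :=
        sum_le_sum fun i _ => by exact_mod_cast min_le_left _ _

theorem sum_padicValInt_add_le (hL : 0 < L) (hy : ∀ i < L, y + i ≠ 0) {J : ℕ}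
    (hJ : ∀ i < L, padicValInt p (y + i) ≤ J) :
    ∑ i ∈ range L, (padicValInt p (y + i) : ℝ) ≤ ((L : ℝ) - 1) / (p - 1) + J := by
  obtain hp : p.Prime := Fact.out
  calc ∑ i ∈ range L, (padicValInt p (y + i) : ℝ)
        = ∑ i ∈ range L, ((min (padicValInt p (y + i)) J : ℕ) : ℝ) :=
        sum_congr rfl fun i hi => by rw [min_eq_left (hJ i (mem_range.1 hi))]
    _ = ∑ j ∈ Icc 1 J, (#{i ∈ range L | (p : ℤ) ^ j ∣ y + (i : ℕ)} : ℝ) := by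
        exact_mod_cast sum_min_padicValInt_eq_sum_card _ (fun i hi => hy i (mem_range.1 hi)) J
    _ ≤ ((L : ℝ) - 1) / (p - 1) + J := by
        refine sum_Icc_le_of_le_div_pow_add_one (by exact_mod_cast hp.one_lt)
          (sub_nonneg.2 (Nat.one_le_cast.2 hL)) (fun j => ?_) J
        simpa using (card_range_filter_dvd_add_bounds (pow_pos hp.pos j) y L).2

end ConsecutiveIntegers

/-- For a prime p, an integer λ = L > 0, and an integer y with
y > 0 or y < 1 - L, the sum of p-adic valuations of y, y+1, ..., y+L-1 satisfies
L/(p-1) - ⌈log_p L⌉ - 1 ≤ Σ v_p(y+i) ≤ (L-1)/(p-1) + max{⌊log_p|y|⌋, ⌊log_p|y+L-1|⌋}. -/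
theorem stmt0 (p : ℕ) (hp : p.Prime) (L : ℕ) (hL : 0 < L) (y : ℤ)
    (hy : 0 < y ∨ y < 1 - (L : ℤ)) :
    (L : ℝ) / ((p : ℝ) - 1) - (⌈Real.logb p L⌉ : ℝ) - 1
      ≤ ∑ i ∈ Finset.range L, (padicValInt p (y + i) : ℝ) ∧
    ∑ i ∈ Finset.range L, (padicValInt p (y + i) : ℝ)
      ≤ ((L : ℝ) - 1) / ((p : ℝ) - 1)
        + max ((⌊Real.logb p |(y : ℝ)|⌋ : ℝ)) ((⌊Real.logb p |(y : ℝ) + (L : ℝ) - 1|⌋ : ℝ)) := by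
  have := Fact.mk hp
  have hne : ∀ i < L, y + (i : ℕ) ≠ 0 := by omega
  constructor
  · rw [Real.ceil_logb_natCast (Nat.cast_nonneg L), Int.clog_natCast, Int.cast_natCast]
    exact le_sum_padicValInt_add hne
  · have hlast : (y : ℝ) + L - 1 = ((y + L - 1 : ℤ) : ℝ) := by push_cast; ring
    rw [hlast, Real.floor_logb_abs_intCast, Real.floor_logb_abs_intCast]
    exact_mod_cast sum_padicValInt_add_le hL hne fun i hi =>
      padicValInt_le_max_log_natAbs p (by omega : y ≤ y + i) (by omega : y + i ≤ y + L - 1)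
end

section
/- Let k₁, …, k_M be an arithmetic progression of integers with common difference coprime to p, let e ≥ 0 with p^e dividing M, and set D = M/p^e. Then: (a) the number of indices i with v_p(k_i) ≥ e equals D; (b) for each 0 ≤ v < e, the number of indices i with v_p(k_i) = v equals D·(p-1)·p^{e-v-1}. -/
/-!
Modulo `p ^ w` the common difference `c` is invertible, so `p ^ w ∣ k i` pins `i` to a single
residue class modulo `p ^ w`; when `p ^ w ∣ M` exactly `M / p ^ w` of the indices `i < M` lie in
it. Taking `w = e` gives (a), and the indices with `v_p (k i) = v` are those counted for
`w = v` minus those counted for `w = v + 1`, which gives (b).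
-/

open Finset

lemma exists_dvd_add_mul_iff_modEq {n : ℕ} [NeZero n] {c : ℤ} (hc : IsCoprime c n) (a : ℤ) :
    ∃ r : ℕ, ∀ i : ℕ, (n : ℤ) ∣ a + i * c ↔ i ≡ r [MOD n] := by
  obtain ⟨u, hu⟩ : IsUnit (c : ZMod n) :=
    isCoprime_zero_right.mp (by simpa using hc.map (Int.castRingHom (ZMod n)))
  refine ⟨(-a * ↑u⁻¹ : ZMod n).val, fun i => ?_⟩
  rw [← ZMod.natCast_eq_natCast_iff, ZMod.natCast_zmod_val, ← ZMod.intCast_zmod_eq_zero_iff_dvd,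
    Int.cast_add, Int.cast_mul, Int.cast_natCast, ← hu, Units.eq_mul_inv_iff_mul_eq,
    eq_neg_iff_add_eq_zero, add_comm]

lemma card_filter_range_dvd_add_mul {n M : ℕ} [NeZero n] (hnM : n ∣ M) {c : ℤ}
    (hc : IsCoprime c n) (a : ℤ) :
    #{i ∈ range M | (n : ℤ) ∣ a + (i : ℕ) * c} = M / n := by
  obtain ⟨r, hr⟩ := exists_dvd_add_mul_iff_modEq hc a
  rw [filter_congr fun i _ => hr i, ← Nat.count_eq_card_filter_range,
    Nat.count_modEq_card _ (Nat.pos_of_neZero n), Nat.mod_eq_zero_of_dvd hnM]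
  simp

lemma div_pow_sub_div_pow_succ {p : ℕ} (hp : 0 < p) (D : ℕ) {v e : ℕ} (hv : v < e) :
    p ^ e * D / p ^ v - p ^ e * D / p ^ (v + 1) = D * (p - 1) * p ^ (e - v - 1) := by
  obtain ⟨m, rfl⟩ := Nat.exists_eq_add_of_lt hv
  have h₁ : p ^ (v + m + 1) * D / p ^ v = p ^ m * p * D := by
    rw [show p ^ (v + m + 1) * D = p ^ v * (p ^ m * p * D) by ring,
      Nat.mul_div_cancel_left _ (pow_pos hp v)]
  have h₂ : p ^ (v + m + 1) * D / p ^ (v + 1) = p ^ m * D := by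
    rw [show p ^ (v + m + 1) * D = p ^ (v + 1) * (p ^ m * D) by ring,
      Nat.mul_div_cancel_left _ (pow_pos hp (v + 1))]
  rw [h₁, h₂, show v + m + 1 - v - 1 = m by omega, Nat.mul_sub_one, Nat.sub_mul]
  ring_nf

theorem stmt4_general (p : ℕ) (hp : p.Prime) (M : ℕ) (k₁ c : ℤ)
    (hc : IsCoprime c (p : ℤ)) (e : ℕ) (he : p ^ e ∣ M) (D : ℕ) (hD : D = M / p ^ e)
    (k : ℕ → ℤ) (hk : ∀ i, k i = k₁ + i * c) :
    ((Finset.range M).filter fun i => (p : ℤ) ^ e ∣ k i).card = D ∧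
    ∀ v : ℕ, v < e →
      ((Finset.range M).filter fun i =>
        (p : ℤ) ^ v ∣ k i ∧ ¬ (p : ℤ) ^ (v + 1) ∣ k i).card
      = D * (p - 1) * p ^ (e - v - 1) := by
  have : NeZero p := ⟨hp.ne_zero⟩
  have count (w : ℕ) (hw : p ^ w ∣ M) : #{i ∈ range M | (p : ℤ) ^ w ∣ k i} = M / p ^ w := by
    simpa [hk] using card_filter_range_dvd_add_mul hw (by simpa using hc.pow_right) k₁
  refine ⟨hD ▸ count e he, fun v hv => ?_⟩
  have hsub : {i ∈ range M | (p : ℤ) ^ (v + 1) ∣ k i} ⊆ {i ∈ range M | (p : ℤ) ^ v ∣ k i} :=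
    monotone_filter_right _ fun _ _ => (pow_dvd_pow _ v.le_succ).trans
  obtain ⟨D', rfl⟩ := he
  rw [filter_and_not, card_sdiff_of_subset hsub,
    count v (dvd_mul_of_dvd_left (pow_dvd_pow p hv.le) _),
    count (v + 1) (dvd_mul_of_dvd_left (pow_dvd_pow p hv) _),
    hD, Nat.mul_div_cancel_left _ (pow_pos hp.pos e)]
  exact div_pow_sub_div_pow_succ hp.pos D' hv

/-- Let k i = k₁ + i·c (i = 0,…,M-1) be an arithmetic progression of
integers with common difference c coprime to the prime p, let p^e ∣ M and D = M/p^e.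
(a) #{i : v_p(k i) ≥ e} = D (where divisibility by p^e encodes v_p ≥ e, including 0);
(b) for 0 ≤ v < e, #{i : v_p(k i) = v} = D·(p-1)·p^{e-v-1}. -/
theorem stmt4 (p : ℕ) (hp : p.Prime) (M : ℕ) (hM : 0 < M) (k₁ c : ℤ)
    (hc : IsCoprime c (p : ℤ)) (e : ℕ) (he : p ^ e ∣ M) (D : ℕ) (hD : D = M / p ^ e)
    (k : ℕ → ℤ) (hk : ∀ i, k i = k₁ + i * c) :
    ((Finset.range M).filter fun i => (p : ℤ) ^ e ∣ k i).card = D ∧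
    ∀ v : ℕ, v < e →
      ((Finset.range M).filter fun i =>
        (p : ℤ) ^ v ∣ k i ∧ ¬ (p : ℤ) ^ (v + 1) ∣ k i).card
      = D * (p - 1) * p ^ (e - v - 1) :=
  stmt4_general p hp M k₁ c hc e he D hD k hk
end

section
/- Let 𝒫 = {(i, y_i) : i ≥ 0} with y_i ∈ ℝ_{≥0}, and suppose for some positive integer C and real number δ that the consecutive differences Δ_i = y_i − y_{i−1} satisfy Δ_{i+C} = Δ_i + δ for all i ≥ 1 (i.e. the Δ-slopes form a union of C arithmetic progressions with common difference δ). Then if x ≥ C is the index of a breakpoint (vertex) of the lower convex hull (Newton polygon) of 𝒫, so is x − C. -/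
/-
Shifting indices by `C` preserves breakpoints, and the hypothesis on the Δ-slopes says precisely
that the shifted sequence `i ↦ y (i + C)` differs from `y` by the affine function
`i ↦ (y C - y 0) + δ i`. Adding an affine function changes both sides of every secant inequality
by the same amount, so it preserves breakpoints as well.
-/

/-- `x` is a breakpoint (vertex) of the Newton polygon (lower convex hull) of the
points `(i, y i)`: the point `(x, y x)` lies strictly below every secant line
through points `(i, y i)`, `(j, y j)` with `i < x < j`. -/
def IsBreakpoint (y : ℕ → ℝ) (x : ℕ) : Prop :=
  ∀ i j : ℕ, i < x → x < j →
    y x * ((j : ℝ) - (i : ℝ)) < y i * ((j : ℝ) - (x : ℝ)) + y j * ((x : ℝ) - (i : ℝ))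

theorem IsBreakpoint.comp_add_right {y : ℕ → ℝ} {x C : ℕ} (h : IsBreakpoint y (x + C)) :
    IsBreakpoint (fun i => y (i + C)) x := by
  intro i j hi hj
  have := h (i + C) (j + C) (by omega) (by omega)
  push_cast at this
  linarith

theorem isBreakpoint_add_affine_iff (y : ℕ → ℝ) (a b : ℝ) (x : ℕ) :
    IsBreakpoint (fun i => y i + a + b * i) x ↔ IsBreakpoint y x := by
  refine forall₂_congr fun i j => imp_congr_right fun _ => imp_congr_right fun _ => ?_
  constructor <;> intro h <;> linarith

theorem apply_add_eq_apply_add_affine (y : ℕ → ℝ) (C : ℕ) (δ : ℝ)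
    (hΔ : ∀ i : ℕ, 1 ≤ i → y (i + C) - y (i + C - 1) = (y i - y (i - 1)) + δ) (i : ℕ) :
    y (i + C) = y i + (y C - y 0) + δ * i := by
  induction i with
  | zero => simp
  | succ n ih =>
    have h := hΔ (n + 1) (by omega)
    rw [show n + 1 + C - 1 = n + C by omega, Nat.add_sub_cancel] at h
    push_cast
    linarith

theorem stmt5_general (y : ℕ → ℝ) (C : ℕ) (δ : ℝ)
    (hΔ : ∀ i : ℕ, 1 ≤ i → y (i + C) - y (i + C - 1) = (y i - y (i - 1)) + δ)
    (x : ℕ) (hx : C ≤ x) (hbp : IsBreakpoint y x) :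
    IsBreakpoint y (x - C) := by
  rw [← Nat.sub_add_cancel hx] at hbp
  have hshift := hbp.comp_add_right
  rw [funext (apply_add_eq_apply_add_affine y C δ hΔ)] at hshift
  exact (isBreakpoint_add_affine_iff y _ δ _).mp hshift

/-- If the Δ-slopes Δ_i = y_i − y_{i−1} satisfy Δ_{i+C} = Δ_i + δ for
all i ≥ 1 (C arithmetic progressions with common difference δ), then whenever
x ≥ C is a breakpoint of the Newton polygon of {(i, y_i)}, so is x − C. -/
theorem stmt5 (y : ℕ → ℝ) (hy : ∀ i, 0 ≤ y i) (C : ℕ) (hC : 0 < C) (δ : ℝ)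
    (hΔ : ∀ i : ℕ, 1 ≤ i → y (i + C) - y (i + C - 1) = (y i - y (i - 1)) + δ)
    (x : ℕ) (hx : C ≤ x) (hbp : IsBreakpoint y x) :
    IsBreakpoint y (x - C) :=
  stmt5_general y C δ hΔ x hx hbp
end

section
/- Fix a, b > 0 and let ℛ be the region in the plane between the graphs of u(x) = ax² + bx·log x and ℓ(x) = ax² − bx·log x (for x > 1). For every ε > 0 there is a constant C > 0 (depending only on a, b, ε) such that: if M < N are real numbers with M > 1 and there exist y_M, y_N so that the line segment from (M, y_M) to (N, y_N) is entirely contained in ℛ, then N − M ≤ C·M^{1/2+ε}. -/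
/-!
The lower curve bounds the chord at its endpoints and the upper curve bounds it at its midpoint.
Since the chord of `a x²` lies `a (N - M)² / 4` above the parabola at the midpoint, while the two
curves differ there by `O(N log N)`, we get `a (N - M)² ≤ 8 b N log N`. If `N ≤ 2M` this gives
`(N - M)² ≪ M^(1 + 2ε)` via `log x ≤ x^δ / δ`; if `N > 2M` then `N ≤ 2 (N - M)`, so `N ≪ log N`
and `N` is bounded.
-/

open Real

lemma mul_log_le_mul_log {x y : ℝ} (hx : 1 ≤ x) (hxy : x ≤ y) : x * log x ≤ y * log y :=
  mul_le_mul hxy (log_le_log (by linarith) hxy) (log_nonneg hx) (by linarith)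

lemma mul_log_le_rpow_div {x δ : ℝ} (hx : 0 ≤ x) (hδ : 0 < δ) :
    x * log x ≤ x ^ (1 + δ) / δ := by
  calc x * log x ≤ x * (x ^ δ / δ) := mul_le_mul_of_nonneg_left (log_le_rpow_div hx hδ) hx
    _ = x ^ (1 + δ) / δ := by rw [rpow_add' hx (by positivity), rpow_one]; ring

lemma le_four_mul_sq_of_le_mul_log {x c : ℝ} (hx : 0 < x) (hc : 0 ≤ c) (h : x ≤ c * log x) :
    x ≤ 4 * c ^ 2 := by
  have hlog : log x ≤ 2 * √x := by
    have := log_le_rpow_div hx.le (by norm_num : (0 : ℝ) < 1 / 2)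
    rw [← sqrt_eq_rpow] at this
    linarith
  have hsqrt : √x * √x = x := mul_self_sqrt hx.le
  have hsqrt_pos : 0 < √x := sqrt_pos.mpr hx
  have : √x ≤ 2 * c := by nlinarith [mul_le_mul_of_nonneg_left hlog hc]
  nlinarith

lemma sub_le_sqrt_mul_rpow_of_sq_sub_le {M N A ε : ℝ} (hM : 0 ≤ M) (hA : 0 ≤ A)
    (h : (N - M) ^ 2 ≤ A * M ^ (1 + 2 * ε)) : N - M ≤ √A * M ^ ((1 : ℝ) / 2 + ε) := by
  have hsqrt : √(M ^ (1 + 2 * ε)) = M ^ ((1 : ℝ) / 2 + ε) := by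
    rw [sqrt_eq_rpow, ← rpow_mul hM]
    ring_nf
  calc N - M ≤ |N - M| := le_abs_self _
    _ ≤ √(A * M ^ (1 + 2 * ε)) := abs_le_sqrt h
    _ = √A * M ^ ((1 : ℝ) / 2 + ε) := by rw [sqrt_mul hA, hsqrt]

lemma exists_sub_le_rpow_of_sq_sub_le_mul_log {K ε : ℝ} (hK : 0 < K) (hε : 0 < ε) :
    ∃ C > 0, ∀ M N : ℝ, 1 < M → M ≤ N → (N - M) ^ 2 ≤ K * (N * log N) →
      N - M ≤ C * M ^ ((1 : ℝ) / 2 + ε) := by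
  set A := K * 2 ^ (1 + 2 * ε) / (2 * ε)
  refine ⟨√A + 64 * K ^ 2, by positivity, fun M N hM hMN h => ?_⟩
  have hpow : 1 ≤ M ^ ((1 : ℝ) / 2 + ε) := one_le_rpow hM.le (by linarith)
  rcases le_or_gt N (2 * M) with hN | hN
  · have hsq : (N - M) ^ 2 ≤ A * M ^ (1 + 2 * ε) :=
      calc (N - M) ^ 2 ≤ K * (N * log N) := h
        _ ≤ K * ((2 * M) ^ (1 + 2 * ε) / (2 * ε)) := by
          gcongr
          exact (mul_log_le_mul_log (by linarith) hN).trans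
            (mul_log_le_rpow_div (by linarith) (by positivity))
        _ = A * M ^ (1 + 2 * ε) := by rw [mul_rpow zero_le_two (by linarith)]; ring
    have := sub_le_sqrt_mul_rpow_of_sq_sub_le (by linarith) (by positivity) hsq
    nlinarith
  · have hNlog : N ≤ 4 * K * log N := by
      have : N * N ≤ 4 * K * log N * N := by nlinarith
      exact le_of_mul_le_mul_right this (by linarith)
    have hbound := le_four_mul_sq_of_le_mul_log (by linarith) (by positivity) hNlog
    nlinarith [sqrt_nonneg A]

lemma sq_sub_le_of_chord_between {a b M N yM yN : ℝ} (ha : 0 < a) (hb : 0 < b)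
    (hM : 1 < M) (hMN : M < N)
    (hlowM : a * M ^ 2 - b * M * log M ≤ yM) (hlowN : a * N ^ 2 - b * N * log N ≤ yN)
    (hupMid : (yM + yN) / 2 ≤ a * ((M + N) / 2) ^ 2 + b * ((M + N) / 2) * log ((M + N) / 2)) :
    (N - M) ^ 2 ≤ 8 * b / a * (N * log N) := by
  have hM' := mul_log_le_mul_log hM.le hMN.le
  have hMid : (M + N) / 2 * log ((M + N) / 2) ≤ N * log N :=
    mul_log_le_mul_log (by linarith) (by linarith)
  rw [div_mul_eq_mul_div, le_div_iff₀ ha]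
  nlinarith [mul_le_mul_of_nonneg_left hM' hb.le, mul_le_mul_of_nonneg_left hMid hb.le]

/-- Fix a, b > 0 and the region ℛ between u(x)=ax²+bx·log x and
ℓ(x)=ax²−bx·log x for x > 1.  For every ε > 0 there is C > 0 such that whenever a
line segment from (M, y_M) to (N, y_N) with 1 < M < N lies entirely in ℛ, we have
N − M ≤ C·M^{1/2+ε}. -/
theorem stmt7 (a b : ℝ) (ha : 0 < a) (hb : 0 < b) (ε : ℝ) (hε : 0 < ε) :
    ∃ C : ℝ, 0 < C ∧ ∀ M N yM yN : ℝ, 1 < M → M < N →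
      (∀ t : ℝ, t ∈ Set.Icc (0 : ℝ) 1 →
        a * ((1 - t) * M + t * N) ^ 2
            - b * ((1 - t) * M + t * N) * Real.log ((1 - t) * M + t * N)
          ≤ (1 - t) * yM + t * yN ∧
        (1 - t) * yM + t * yN
          ≤ a * ((1 - t) * M + t * N) ^ 2
            + b * ((1 - t) * M + t * N) * Real.log ((1 - t) * M + t * N)) →
      N - M ≤ C * M ^ ((1 : ℝ) / 2 + ε) := by
  obtain ⟨C, hC, hgap⟩ :=
    exists_sub_le_rpow_of_sq_sub_le_mul_log (K := 8 * b / a) (by positivity) hε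
  refine ⟨C, hC, fun M N yM yN hM hMN hseg => hgap M N hM hMN.le ?_⟩
  have hlowM := (hseg 0 ⟨le_rfl, zero_le_one⟩).1
  have hlowN := (hseg 1 ⟨zero_le_one, le_rfl⟩).1
  have hupMid := (hseg (1 / 2) ⟨by norm_num, by norm_num⟩).2
  simp only [sub_zero, sub_self, one_mul, zero_mul, add_zero, zero_add] at hlowM hlowN
  rw [show (1 - 1 / 2 : ℝ) * M + 1 / 2 * N = (M + N) / 2 by ring] at hupMid
  exact sq_sub_le_of_chord_between ha hb hM hMN hlowM hlowN (by linarith)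
end

section
/- With a, b > 0, u(x) = ax² + bx·log x, and ℓ(x) = ax² − bx·log x, fix ε ∈ (0, 1/2). Then for all sufficiently large M, u'(M + M^{1/2+ε}) > (u(M + M^{1/2+ε}) − ℓ(M)) / M^{1/2+ε}. -/
/-!
Multiplying the inequality by `h = M ^ (1/2 + ε)`, the quadratic terms leave exactly `a h²`
(the tangent of `a x²` at `M + h` overshoots its secant over `[M, M + h]` by `a h`), and the
logarithmic terms leave `b h - b M (log (M + h) + log M)`. Since `h² = M ^ (1 + 2ε)` and
`log M = o(M ^ (2ε))`, the term `a h²` beats `b M (log (M + h) + log M) = O(M log M)`.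
-/

open Real Filter

theorem secant_slope_lt_deriv_iff (a b M : ℝ) {h : ℝ} (hh : 0 < h) :
    ((a * (M + h) ^ 2 + b * (M + h) * log (M + h)) - (a * M ^ 2 - b * M * log M)) / h
        < 2 * a * (M + h) + b * log (M + h) + b ↔
      b * M * (log (M + h) + log M) < a * h ^ 2 + b * h := by
  rw [div_lt_iff₀ hh]
  have key : (2 * a * (M + h) + b * log (M + h) + b) * h
      - ((a * (M + h) ^ 2 + b * (M + h) * log (M + h)) - (a * M ^ 2 - b * M * log M))
      = a * h ^ 2 + b * h - b * M * (log (M + h) + log M) := by ring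
  constructor <;> intro <;> linarith

theorem eventually_log_le_mul_rpow {c s : ℝ} (hc : 0 < c) (hs : 0 < s) :
    ∀ᶠ x in atTop, log x ≤ c * x ^ s := by
  filter_upwards [(isLittleO_log_rpow_atTop hs).def hc, eventually_ge_atTop 0] with x hx hx0
  rw [norm_of_nonneg (rpow_nonneg hx0 _)] at hx
  exact (le_abs_self _).trans hx

theorem log_add_le_two_mul_log {M h : ℝ} (hM : 2 ≤ M) (h0 : 0 ≤ h) (hhM : h ≤ M) :
    log (M + h) ≤ 2 * log M := by
  have hlog2 : log 2 ≤ log M := log_le_log two_pos hM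
  have : log (M + h) ≤ log 2 + log M := by
    rw [← log_mul two_ne_zero (by positivity)]
    exact log_le_log (by positivity) (by linarith)
  linarith

theorem rpow_half_add_sq {M : ℝ} (hM : 0 < M) (ε : ℝ) :
    (M ^ ((1 : ℝ) / 2 + ε)) ^ 2 = M * M ^ (2 * ε) := by
  rw [← rpow_natCast, ← rpow_mul hM.le, show ((1 : ℝ) / 2 + ε) * (2 : ℕ) = 1 + 2 * ε by
    push_cast; ring, rpow_add hM, rpow_one]

/-- With a, b > 0, u(x) = ax² + bx·log x, ℓ(x) = ax² − bx·log x, and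
ε ∈ (0, 1/2), for all sufficiently large M we have
u'(M + M^{1/2+ε}) > (u(M + M^{1/2+ε}) − ℓ(M)) / M^{1/2+ε},
where u'(x) = 2ax + b·log x + b. -/
theorem stmt8 (a b : ℝ) (ha : 0 < a) (hb : 0 < b) (ε : ℝ) (hε1 : 0 < ε)
    (hε2 : ε < 1 / 2) :
    ∃ M₀ : ℝ, ∀ M : ℝ, M₀ ≤ M →
      ((a * (M + M ^ ((1 : ℝ) / 2 + ε)) ^ 2
          + b * (M + M ^ ((1 : ℝ) / 2 + ε)) * Real.log (M + M ^ ((1 : ℝ) / 2 + ε)))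
        - (a * M ^ 2 - b * M * Real.log M)) / M ^ ((1 : ℝ) / 2 + ε)
      < 2 * a * (M + M ^ ((1 : ℝ) / 2 + ε))
          + b * Real.log (M + M ^ ((1 : ℝ) / 2 + ε)) + b := by
  have hlog := eventually_log_le_mul_rpow (c := a / (3 * b)) (by positivity)
    (by linarith : 0 < 2 * ε)
  obtain ⟨M₀, hM₀⟩ := eventually_atTop.mp (hlog.and (eventually_ge_atTop 2))
  refine ⟨M₀, fun M hM => ?_⟩
  obtain ⟨hlogM, hM2⟩ := hM₀ M hM
  have hMpos : 0 < M := by linarith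
  have hh : 0 < M ^ ((1 : ℝ) / 2 + ε) := by positivity
  have hhM : M ^ ((1 : ℝ) / 2 + ε) ≤ M := rpow_le_self_of_one_le (by linarith) (by linarith)
  rw [secant_slope_lt_deriv_iff a b M hh]
  calc b * M * (log (M + M ^ ((1 : ℝ) / 2 + ε)) + log M)
      ≤ b * M * (3 * log M) := by
        gcongr
        linarith [log_add_le_two_mul_log hM2 hh.le hhM]
    _ ≤ b * M * (3 * (a / (3 * b) * M ^ (2 * ε))) := by gcongr
    _ = a * (M ^ ((1 : ℝ) / 2 + ε)) ^ 2 := by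
        rw [rpow_half_add_sq hMpos]
        field_simp
    _ < a * (M ^ ((1 : ℝ) / 2 + ε)) ^ 2 + b * M ^ ((1 : ℝ) / 2 + ε) := by
        linarith [mul_pos hb hh]
end

section
/- Let p be an odd prime, and let k_n = k₀ + n(p−1) for n ∈ ℤ. With w_k = (1+p)^k − 1, fix integers b and λ > 0 and set P_{b,λ}(w) = ∏_{j=b−λ+1}^{b} (w − w_{k_j}). Then for any integer n with n ∉ {b−λ+1, …, b}, v_p(P_{b,λ}(w_{k_n})) = λ + Σ_{j=b−λ+1}^{b} v_p(n − j), and this quantity satisfies v_p(P_{b,λ}(w_{k_n})) ≥ λ + λ/(p−1) − ⌈log_p λ⌉ − 1. -/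
/-!
Put `u = 1 + p`, a unit of `ℤ_[p]`. The factor `w_{k_n} - w_{k_j}` equals `u^{k_j} (u^{(n-j)(p-1)} - 1)`,
and lifting the exponent (`p` odd, `p ∣ u - 1`) gives `v_p(u^m - 1) = 1 + v_p(m)`; since `p ∤ p - 1`
this is `1 + v_p(n - j)`. For the bound, the `n - j` are `λ` consecutive nonzero integers, so their
product is divisible by `λ!`, and Legendre's formula `(p - 1) v_p(λ!) = λ - s_p(λ)`, with the digit sum
`s_p(λ) ≤ (p - 1)(⌊log_p λ⌋ + 1)`, bounds `v_p(λ!)` from below.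
-/

open Finset
open scoped Nat

theorem Finset.prod_Icc_eq_prod_range_sub {M : Type*} [CommMonoid M] (f : ℤ → M) (b : ℤ) (L : ℕ) :
    ∏ j ∈ Icc (b - L + 1) b, f j = ∏ i ∈ range L, f (b - i) := by
  refine prod_nbij' (fun j ↦ (b - j).toNat) (fun i ↦ b - i) ?_ ?_ ?_ ?_ fun j hj ↦ ?_
  any_goals intro x hx; simp only [mem_Icc, mem_range] at hx ⊢; omega
  rw [mem_Icc] at hj
  congr 1
  omega

theorem Nat.digits_sum_le_mul_log {b : ℕ} (hb : 1 < b) (n : ℕ) :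
    (b.digits n).sum ≤ (b - 1) * (Nat.log b n + 1) := by
  rcases eq_or_ne n 0 with rfl | hn
  · simp
  calc (b.digits n).sum ≤ (b.digits n).length • (b - 1) :=
        List.sum_le_card_nsmul _ _ fun d hd ↦ Nat.le_sub_one_of_lt (Nat.digits_lt_base hb hd)
    _ = (b - 1) * (Nat.log b n + 1) := by rw [Nat.length_digits b n hb hn, smul_eq_mul, mul_comm]

theorem Nat.log_le_ceil_logb (b n : ℕ) : (Nat.log b n : ℝ) ≤ ⌈Real.logb b n⌉ :=
  (Real.natLog_le_logb n b).trans (Int.le_ceil _)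

section

variable {p : ℕ} [Fact p.Prime]

theorem padicValInt_prod {ι : Type*} {s : Finset ι} {f : ι → ℤ} (h : ∀ i ∈ s, f i ≠ 0) :
    padicValInt p (∏ i ∈ s, f i) = ∑ i ∈ s, padicValInt p (f i) := by
  induction s using Finset.cons_induction with
  | empty => simp
  | cons a s ha ih =>
    rw [forall_mem_cons] at h
    rw [prod_cons, sum_cons, padicValInt.mul h.1 (prod_ne_zero_iff.mpr h.2), ih h.2]

theorem padicValInt_le_of_dvd {a c : ℤ} (hc : c ≠ 0) (h : a ∣ c) :
    padicValInt p a ≤ padicValInt p c := by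
  have := (padicValInt_dvd_iff (p := p) (padicValInt p a) c).mp ((padicValInt_dvd a).trans h)
  exact this.resolve_left hc

theorem padicValNat_factorial_le_sum_padicValInt_sub {n b : ℤ} {L : ℕ}
    (hn : n ∉ Icc (b - L + 1) b) :
    padicValNat p L ! ≤ ∑ j ∈ Icc (b - L + 1) b, padicValInt p (n - j) := by
  have hne : ∀ j ∈ Icc (b - L + 1) b, n - j ≠ 0 := fun j hj h ↦ hn (by rwa [sub_eq_zero.mp h])
  have hdvd : ((L ! : ℕ) : ℤ) ∣ ∏ j ∈ Icc (b - L + 1) b, (n - j) := by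
    simpa [prod_Icc_eq_prod_range_sub, sub_sub_eq_add_sub, add_sub_right_comm]
      using Nat.factorial_coe_dvd_prod L (n - b)
  rw [← padicValInt_prod hne, ← padicValInt.of_nat]
  exact padicValInt_le_of_dvd (prod_ne_zero_iff.mpr hne) hdvd

theorem le_padicValNat_factorial (L : ℕ) :
    (L : ℝ) / (p - 1) - Nat.log p L - 1 ≤ padicValNat p L ! := by
  have hp := (Fact.out : p.Prime)
  have hL : L ≤ (p - 1) * padicValNat p L ! + (p - 1) * (Nat.log p L + 1) := by
    have := sub_one_mul_padicValNat_factorial (p := p) L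
    have := Nat.digits_sum_le_mul_log hp.one_lt L
    have := Nat.digit_sum_le p L
    omega
  have hp1 : (0 : ℝ) < p - 1 := by
    have : (2 : ℝ) ≤ p := by exact_mod_cast hp.two_le
    linarith
  have hLR : (L : ℝ) ≤ (p - 1) * (padicValNat p L ! + Nat.log p L + 1) := by
    have := (Nat.cast_le (α := ℝ)).mpr hL
    push_cast [Nat.cast_sub hp.one_le] at this
    linarith
  linarith [(div_le_iff₀' hp1).mpr hLR]

namespace Padic

theorem valuation_neg (x : ℚ_[p]) : (-x).valuation = x.valuation := by
  rcases eq_or_ne x 0 with rfl | hx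
  · simp
  have h : (-1 : ℚ_[p]).valuation = 0 := by
    simpa [padicValInt] using valuation_intCast (p := p) (-1)
  rw [← neg_one_mul, valuation_mul (by simp) hx, h, zero_add]

theorem valuation_prod {ι : Type*} {s : Finset ι} {f : ι → ℚ_[p]} (h : ∀ i ∈ s, f i ≠ 0) :
    (∏ i ∈ s, f i).valuation = ∑ i ∈ s, (f i).valuation := by
  induction s using Finset.cons_induction with
  | empty => simp
  | cons a s ha ih =>
    rw [forall_mem_cons] at h
    rw [prod_cons, sum_cons, valuation_mul h.1 (prod_ne_zero_iff.mpr h.2), ih h.2]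

theorem valuation_one_add_p : (1 + p : ℚ_[p]).valuation = 0 := by
  have : ¬ p ∣ 1 + p := by simpa [Nat.dvd_add_self_right] using (Fact.out : p.Prime).one_lt.ne'
  rw [← Nat.cast_one, ← Nat.cast_add, valuation_natCast, padicValNat.eq_zero_of_not_dvd this,
    Nat.cast_zero]

theorem one_add_p_zpow_injective : Function.Injective fun m : ℤ ↦ (1 + p : ℚ_[p]) ^ m := by
  intro a b hab
  have hp : (0 : ℚ) < p := by exact_mod_cast (Fact.out : p.Prime).pos
  refine zpow_right_injective₀ (a := (1 + p : ℚ)) (by positivity) (by simpa using hp.ne') ?_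
  apply Rat.cast_injective (α := ℚ_[p])
  push_cast
  exact hab

theorem one_add_p_zpow_sub_zpow_ne_zero {a b : ℤ} (hab : a ≠ b) :
    (1 + p : ℚ_[p]) ^ a - (1 + p) ^ b ≠ 0 :=
  sub_ne_zero.mpr (one_add_p_zpow_injective.ne hab)

theorem valuation_one_add_p_pow_sub_one (hodd : Odd p) {N : ℕ} (hN : N ≠ 0) :
    ((1 + p : ℚ_[p]) ^ N - 1).valuation = 1 + padicValNat p N := by
  have hp := (Fact.out : p.Prime)
  have hlt : 1 < 1 + p := by have := hp.pos; omega
  have hcast : (1 + p : ℚ_[p]) ^ N - 1 = (((1 + p) ^ N - 1 ^ N : ℕ) : ℚ_[p]) := by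
    rw [one_pow, Nat.cast_sub (Nat.one_le_pow N (1 + p) (by omega))]
    push_cast; rfl
  rw [hcast, valuation_natCast, padicValNat.pow_sub_pow hodd hlt (by simp)
    (by simpa [Nat.dvd_add_self_right] using hp.one_lt.ne') hN]
  simp [add_comm]

theorem valuation_one_add_p_zpow_sub_zpow (hodd : Odd p) {a b : ℤ} (hab : a ≠ b) :
    ((1 + p : ℚ_[p]) ^ a - (1 + p) ^ b).valuation = 1 + padicValInt p (a - b) := by
  wlog hba : b < a generalizing a b
  · rw [← neg_sub, valuation_neg, this hab.symm (by omega), ← neg_sub a b]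
    simp only [padicValInt, Int.natAbs_neg]
  obtain ⟨N, rfl⟩ : ∃ N : ℕ, a = b + N := ⟨(a - b).toNat, by omega⟩
  have hu : (1 + p : ℚ_[p]) ≠ 0 := by norm_cast; omega
  have hN : (1 + p : ℚ_[p]) ^ N - 1 ≠ 0 := by
    simpa using one_add_p_zpow_sub_zpow_ne_zero (p := p) (show (N : ℤ) ≠ 0 by omega)
  rw [zpow_add₀ hu, zpow_natCast, ← mul_sub_one, valuation_mul (zpow_ne_zero _ hu) hN,
    valuation_zpow, valuation_one_add_p, mul_zero, zero_add,
    valuation_one_add_p_pow_sub_one hodd (by omega), add_sub_cancel_left]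
  simp [padicValInt]

theorem valuation_one_add_p_zpow_sub_zpow_mul_sub_one (hodd : Odd p) (k₀ : ℤ) {n j : ℤ}
    (hnj : n ≠ j) :
    ((1 + p : ℚ_[p]) ^ (k₀ + n * ((p : ℤ) - 1)) - (1 + p) ^ (k₀ + j * ((p : ℤ) - 1))).valuation
      = 1 + padicValInt p (n - j) := by
  have hp := (Fact.out : p.Prime)
  have hp1 : (p : ℤ) - 1 ≠ 0 := by have := hp.two_le; omega
  have hndvd : ¬ (p : ℤ) ∣ (p : ℤ) - 1 := fun h ↦ by
    have := Int.le_of_dvd (by have := hp.two_le; omega) h; omega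
  rw [valuation_one_add_p_zpow_sub_zpow hodd (by simpa [hp1] using hnj),
    show k₀ + n * ((p : ℤ) - 1) - (k₀ + j * ((p : ℤ) - 1)) = (n - j) * ((p : ℤ) - 1) by ring,
    padicValInt.mul (sub_ne_zero.mpr hnj) hp1, padicValInt.eq_zero_of_not_dvd hndvd, add_zero]

end Padic

end

theorem stmt18_general (p : ℕ) [hp : Fact p.Prime] (hodd : Odd p) (k₀ b : ℤ) (L : ℕ)
    (w : ℤ → ℚ_[p])
    (hw : ∀ m : ℤ, w m = (1 + (p : ℚ_[p])) ^ m - 1)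
    (n : ℤ) (hn : n ∉ Finset.Icc (b - (L : ℤ) + 1) b) :
    (∏ j ∈ Finset.Icc (b - (L : ℤ) + 1) b,
        (w (k₀ + n * ((p : ℤ) - 1)) - w (k₀ + j * ((p : ℤ) - 1)))).valuation
      = (L : ℤ) + ∑ j ∈ Finset.Icc (b - (L : ℤ) + 1) b, (padicValInt p (n - j) : ℤ) ∧
    (L : ℝ) + (L : ℝ) / ((p : ℝ) - 1) - (⌈Real.logb p L⌉ : ℝ) - 1
      ≤ ((∏ j ∈ Finset.Icc (b - (L : ℤ) + 1) b,
          (w (k₀ + n * ((p : ℤ) - 1)) - w (k₀ + j * ((p : ℤ) - 1)))).valuation : ℝ) := by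
  have hp1 : (p : ℤ) - 1 ≠ 0 := by have := hp.out.two_le; omega
  have hnj : ∀ j ∈ Icc (b - L + 1) b, n ≠ j := fun j hj h ↦ hn (h ▸ hj)
  have hfactor : ∀ j ∈ Icc (b - L + 1) b,
      w (k₀ + n * ((p : ℤ) - 1)) - w (k₀ + j * ((p : ℤ) - 1))
        = (1 + p : ℚ_[p]) ^ (k₀ + n * ((p : ℤ) - 1)) - (1 + p) ^ (k₀ + j * ((p : ℤ) - 1)) :=
    fun j _ ↦ by rw [hw, hw, sub_sub_sub_cancel_right]
  have hval : (∏ j ∈ Icc (b - L + 1) b,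
      (w (k₀ + n * ((p : ℤ) - 1)) - w (k₀ + j * ((p : ℤ) - 1)))).valuation
        = L + ∑ j ∈ Icc (b - L + 1) b, (padicValInt p (n - j) : ℤ) := by
    rw [prod_congr rfl hfactor, Padic.valuation_prod fun j hj ↦
        Padic.one_add_p_zpow_sub_zpow_ne_zero (by simpa [hp1] using hnj j hj),
      sum_congr rfl fun j hj ↦
        Padic.valuation_one_add_p_zpow_sub_zpow_mul_sub_one hodd k₀ (hnj j hj),
      sum_add_distrib, sum_const, Int.card_Icc]
    simp
  refine ⟨hval, ?_⟩
  have hsum : (padicValNat p L ! : ℝ) ≤ ∑ j ∈ Icc (b - L + 1) b, (padicValInt p (n - j) : ℝ) := by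
    exact_mod_cast padicValNat_factorial_le_sum_padicValInt_sub hn
  rw [hval]
  push_cast
  linarith [le_padicValNat_factorial (p := p) L, Nat.log_le_ceil_logb p L]

/-- Let p be odd prime, k_n = k₀ + n(p−1), w_k = (1+p)^k − 1 ∈ ℚ_p,
and P_{b,L}(w) = ∏_{j=b−L+1}^{b} (w − w_{k_j}).  For any integer n outside
{b−L+1,…,b}: v_p(P_{b,L}(w_{k_n})) = L + Σ_{j=b−L+1}^{b} v_p(n−j), and this is at
least L + L/(p−1) − ⌈log_p L⌉ − 1. -/
theorem stmt18 (p : ℕ) [hp : Fact p.Prime] (hodd : Odd p) (k₀ b : ℤ) (L : ℕ)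
    (hL : 0 < L) (w : ℤ → ℚ_[p])
    (hw : ∀ m : ℤ, w m = (1 + (p : ℚ_[p])) ^ m - 1)
    (n : ℤ) (hn : n ∉ Finset.Icc (b - (L : ℤ) + 1) b) :
    (∏ j ∈ Finset.Icc (b - (L : ℤ) + 1) b,
        (w (k₀ + n * ((p : ℤ) - 1)) - w (k₀ + j * ((p : ℤ) - 1)))).valuation
      = (L : ℤ) + ∑ j ∈ Finset.Icc (b - (L : ℤ) + 1) b, (padicValInt p (n - j) : ℤ) ∧
    (L : ℝ) + (L : ℝ) / ((p : ℝ) - 1) - (⌈Real.logb p L⌉ : ℝ) - 1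
      ≤ ((∏ j ∈ Finset.Icc (b - (L : ℤ) + 1) b,
          (w (k₀ + n * ((p : ℤ) - 1)) - w (k₀ + j * ((p : ℤ) - 1)))).valuation : ℝ) :=
  stmt18_general p (hp := hp) hodd k₀ b L w hw n hn
end

section
/- Let d, d^new : ℤ → ℤ satisfy: d is quasi-linear with period P_d and defect Q_d, d_p := 2d + d^new is quasi-linear with period P_{d_p} and defect Q_{d_p}, and d + d^new is quasi-linear with period P_{d+d^new} and defect Q_{d+d^new}; assume d, d+d^new, d_p are non-decreasing and satisfy the growth condition (d(n) → ∞ as n → ∞, d(n)+d^new(n) → −∞ as n → −∞). Define λ_i = (HZ⁺(i) − LZ⁺(i) + 1) − (HZ⁻(i) − LZ⁻(i) + 1), where HZ⁺(i) = sup{n : d(n) < i}, LZ⁺(i) = inf{n : 2i ≤ 2d(n) + d^new(n)}, HZ⁻(i) = sup{n : 2d(n) + d^new(n) + 2 ≤ 2i}, LZ⁻(i) = inf{n : i < d(n) + d^new(n)}. Then for Q = lcm(Q_d, Q_{d_p}, Q_{d+d^new}), λ_{i+Q} = λ_i + Q·(P_d/Q_d − 4P_{d_p}/Q_{d_p} +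 P_{d+d^new}/Q_{d+d^new}) for all i ≥ 0. -/
/-!
A quasi-linear `f` with period `P` and defect `Q > 0` satisfies `f (n + k * P) = f n + k * Q`,
so raising the level `j` by `k * Q` translates the level sets `{n | f n < j}` and `{n | j ≤ f n}`
by `k * P`; monotonicity makes these sets nonempty and bounded, so their `sSup`/`sInf` translate
too. Since `Q` is a common multiple of the three defects, `HZ⁺`, `LZ⁺`, `HZ⁻`, `LZ⁻` move by
`(Q / Q_d) P_d`, `2 (Q / Q_{dp}) P_{dp}`, `2 (Q / Q_{dp}) P_{dp}` and `(Q / Q_{d+dnew}) P_{d+dnew}`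
when `i` moves to `i + Q`; the factor `2` is there because `d_p` is cut at level `2i`.
-/

open Filter

theorem csSup_image_add_right {α : Type*} [ConditionallyCompleteLattice α] [AddGroup α]
    [AddRightMono α] {s : Set α} (hne : s.Nonempty) (hbdd : BddAbove s) (c : α) :
    sSup ((· + c) '' s) = sSup s + c :=
  ((OrderIso.addRight c).map_csSup' hne hbdd).symm

theorem csInf_image_add_right {α : Type*} [ConditionallyCompleteLattice α] [AddGroup α]
    [AddRightMono α] {s : Set α} (hne : s.Nonempty) (hbdd : BddBelow s) (c : α) :
    sInf ((· + c) '' s) = sInf s + c :=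
  ((OrderIso.addRight c).map_csInf' hne hbdd).symm

section LevelSets

variable {f : ℤ → ℤ}

theorem nonempty_setOf_lt_of_tendsto_atBot (hf : Tendsto f atBot atBot) (j : ℤ) :
    {n | f n < j}.Nonempty :=
  (hf.eventually (eventually_lt_atBot j)).exists

theorem nonempty_setOf_le_of_tendsto_atTop (hf : Tendsto f atTop atTop) (j : ℤ) :
    {n | j ≤ f n}.Nonempty :=
  (hf.eventually (eventually_ge_atTop j)).exists

theorem bddAbove_setOf_lt_of_tendsto_atTop (hf : Tendsto f atTop atTop) (j : ℤ) :
    BddAbove {n | f n < j} := by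
  obtain ⟨N, hN⟩ := eventually_atTop.1 (hf.eventually (eventually_ge_atTop j))
  exact ⟨N, fun n hn => le_of_not_ge fun hNn => (hN n hNn).not_gt hn⟩

theorem bddBelow_setOf_le_of_tendsto_atBot (hf : Tendsto f atBot atBot) (j : ℤ) :
    BddBelow {n | j ≤ f n} := by
  obtain ⟨N, hN⟩ := eventually_atBot.1 (hf.eventually (eventually_lt_atBot j))
  exact ⟨N, fun n hn => le_of_not_ge fun hnN => (hN n hnN).not_ge hn⟩

end LevelSets

def QuasiLinear (f : ℤ → ℤ) (P Q : ℤ) : Prop :=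
  ∀ n, f (n + P) = f n + Q

namespace QuasiLinear

variable {f : ℤ → ℤ} {P Q : ℤ}

theorem map_add_mul (h : QuasiLinear f P Q) (k n : ℤ) :
    f (n + k * P) = f n + k * Q := by
  induction k using Int.induction_on with
  | zero => simp
  | succ k ih => rw [add_mul, one_mul, ← add_assoc, h, ih]; ring
  | pred k ih =>
    have := h (n + (-(k : ℤ) - 1) * P)
    rw [add_assoc, ← add_one_mul, sub_add_cancel, ih] at this
    linarith

theorem tendsto_atTop (h : QuasiLinear f P Q) (hf : Monotone f) (hQ : 0 < Q) :
    Tendsto f atTop atTop := by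
  refine hf.tendsto_atTop_atTop fun b => ⟨|b - f 0| * P, ?_⟩
  have := h.map_add_mul |b - f 0| 0
  rw [zero_add] at this
  nlinarith [le_abs_self (b - f 0), abs_nonneg (b - f 0)]

theorem tendsto_atBot (h : QuasiLinear f P Q) (hf : Monotone f) (hQ : 0 < Q) :
    Tendsto f atBot atBot := by
  refine hf.tendsto_atBot_atBot fun b => ⟨-|b - f 0| * P, ?_⟩
  have := h.map_add_mul (-|b - f 0|) 0
  rw [zero_add] at this
  nlinarith [neg_abs_le (b - f 0), abs_nonneg (b - f 0)]

theorem setOf_lt_add_mul (h : QuasiLinear f P Q) (j k : ℤ) :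
    {n | f n < j + k * Q} = (· + k * P) '' {n | f n < j} := by
  ext n
  rw [Set.image_add_right, Set.mem_preimage, Set.mem_ofPred_eq, Set.mem_ofPred_eq,
    ← neg_mul, h.map_add_mul]
  constructor <;> intro <;> linarith

theorem setOf_le_add_mul (h : QuasiLinear f P Q) (j k : ℤ) :
    {n | j + k * Q ≤ f n} = (· + k * P) '' {n | j ≤ f n} := by
  ext n
  rw [Set.image_add_right, Set.mem_preimage, Set.mem_ofPred_eq, Set.mem_ofPred_eq,
    ← neg_mul, h.map_add_mul]
  constructor <;> intro <;> linarith

theorem csSup_setOf_lt_add_mul (h : QuasiLinear f P Q) (hf : Monotone f) (hQ : 0 < Q)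
    (j k : ℤ) :
    sSup {n | f n < j + k * Q} = sSup {n | f n < j} + k * P := by
  rw [h.setOf_lt_add_mul, csSup_image_add_right
    (nonempty_setOf_lt_of_tendsto_atBot (h.tendsto_atBot hf hQ) j)
    (bddAbove_setOf_lt_of_tendsto_atTop (h.tendsto_atTop hf hQ) j)]

theorem csInf_setOf_le_add_mul (h : QuasiLinear f P Q) (hf : Monotone f) (hQ : 0 < Q)
    (j k : ℤ) :
    sInf {n | j + k * Q ≤ f n} = sInf {n | j ≤ f n} + k * P := by
  rw [h.setOf_le_add_mul, csInf_image_add_right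
    (nonempty_setOf_le_of_tendsto_atTop (h.tendsto_atTop hf hQ) j)
    (bddBelow_setOf_le_of_tendsto_atBot (h.tendsto_atBot hf hQ) j)]

end QuasiLinear

theorem stmt19_general (d dnew : ℤ → ℤ)
    (Pd Qd Pdp Qdp Pdn Qdn : ℤ)
    (hQd : 0 < Qd) (hQdp : 0 < Qdp)
    (hQdn : 0 < Qdn)
    (hqd : ∀ n : ℤ, d (n + Pd) = d n + Qd)
    (hqdp : ∀ n : ℤ, 2 * d (n + Pdp) + dnew (n + Pdp) = 2 * d n + dnew n + Qdp)
    (hqdn : ∀ n : ℤ, d (n + Pdn) + dnew (n + Pdn) = d n + dnew n + Qdn)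
    (hd : Monotone d) (hdn : Monotone fun n => d n + dnew n)
    (hdp : Monotone fun n => 2 * d n + dnew n)
    (lam : ℕ → ℤ)
    (hlam : ∀ i : ℕ,
      lam i = ((sSup {n : ℤ | d n < (i : ℤ)}
                - sInf {n : ℤ | 2 * (i : ℤ) ≤ 2 * d n + dnew n} + 1)
              - (sSup {n : ℤ | 2 * d n + dnew n + 2 ≤ 2 * (i : ℤ)}
                - sInf {n : ℤ | (i : ℤ) < d n + dnew n} + 1)))
    (Q : ℤ) (hQ : Q = lcm (lcm Qd Qdp) Qdn) :
    ∀ i : ℕ, (lam (i + Q.toNat) : ℝ)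
      = (lam i : ℝ)
        + (Q : ℝ) * ((Pd : ℝ) / (Qd : ℝ) - 4 * (Pdp : ℝ) / (Qdp : ℝ)
            + (Pdn : ℝ) / (Qdn : ℝ)) := by
  intro i
  obtain ⟨kd, hkd⟩ : Qd ∣ Q := hQ ▸ (dvd_lcm_left Qd Qdp).trans (dvd_lcm_left _ _)
  obtain ⟨kp, hkp⟩ : Qdp ∣ Q := hQ ▸ (dvd_lcm_right Qd Qdp).trans (dvd_lcm_left _ _)
  obtain ⟨kn, hkn⟩ : Qdn ∣ Q := hQ ▸ dvd_lcm_right _ _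
  have qdp : QuasiLinear (fun n => 2 * d n + dnew n) Pdp Qdp := hqdp
  have qdn : QuasiLinear (fun n => d n + dnew n) Pdn Qdn := hqdn
  have hlow : ∀ j : ℤ,
      {n | 2 * d n + dnew n + 2 ≤ 2 * j} = {n | 2 * d n + dnew n < 2 * j - 1} :=
    fun j => Set.ext fun n => by simp only [Set.mem_ofPred_eq]; omega
  have hhigh : ∀ j : ℤ, {n | j < d n + dnew n} = {n | j + 1 ≤ d n + dnew n} :=
    fun j => Set.ext fun n => by simp only [Set.mem_ofPred_eq]; omega
  have hA : sSup {n | d n < (i : ℤ) + Q} = sSup {n | d n < (i : ℤ)} + kd * Pd := by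
    rw [← QuasiLinear.csSup_setOf_lt_add_mul hqd hd hQd, hkd, mul_comm]
  have hB : sInf {n | 2 * ((i : ℤ) + Q) ≤ 2 * d n + dnew n}
      = sInf {n | 2 * (i : ℤ) ≤ 2 * d n + dnew n} + 2 * kp * Pdp := by
    rw [← qdp.csInf_setOf_le_add_mul hdp hQdp, hkp]; ring_nf
  have hC : sSup {n | 2 * d n + dnew n + 2 ≤ 2 * ((i : ℤ) + Q)}
      = sSup {n | 2 * d n + dnew n + 2 ≤ 2 * (i : ℤ)} + 2 * kp * Pdp := by
    rw [hlow, hlow, ← qdp.csSup_setOf_lt_add_mul hdp hQdp, hkp]; ring_nf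
  have hD : sInf {n | (i : ℤ) + Q < d n + dnew n}
      = sInf {n | (i : ℤ) < d n + dnew n} + kn * Pdn := by
    rw [hhigh, hhigh, ← qdn.csInf_setOf_le_add_mul hdn hQdn, hkn]; ring_nf
  have hshift : lam (i + Q.toNat) = lam i + (kd * Pd - 4 * (kp * Pdp) + kn * Pdn) := by
    rw [hlam, hlam, Nat.cast_add, Int.toNat_of_nonneg (hQ ▸ Int.lcm_nonneg _ _),
      hA, hB, hC, hD]
    ring
  have hdiv : ∀ {q k : ℤ} (p : ℤ), 0 < q → Q = q * k → (Q : ℝ) * (p / q) = k * p :=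
    fun p hq hk => by rw [hk]; push_cast; field_simp
  rw [hshift]
  push_cast
  linear_combination
    (hdiv Pd hQd hkd).symm - 4 * (hdiv Pdp hQdp hkp).symm + (hdiv Pdn hQdn hkn).symm

/-- With d, d+d^new, d_p = 2d+d^new non-decreasing and quasi-linear
(periods P_d, P_{d+dnew}, P_{dp} and defects Q_d, Q_{d+dnew}, Q_{dp}), d(n) → ∞
and d(n)+d^new(n) → −∞, define λ_i via the highest/lowest zeros of Δ_i^±.  Then
for Q = lcm(Q_d, Q_{dp}, Q_{d+dnew}), λ_{i+Q} = λ_i + Q(P_d/Q_d − 4P_{dp}/Q_{dp}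
+ P_{d+dnew}/Q_{d+dnew}) for all i ≥ 0. -/
theorem stmt19 (d dnew : ℤ → ℤ)
    (Pd Qd Pdp Qdp Pdn Qdn : ℤ)
    (hPd : 0 < Pd) (hQd : 0 < Qd) (hPdp : 0 < Pdp) (hQdp : 0 < Qdp)
    (hPdn : 0 < Pdn) (hQdn : 0 < Qdn)
    (hqd : ∀ n : ℤ, d (n + Pd) = d n + Qd)
    (hqdp : ∀ n : ℤ, 2 * d (n + Pdp) + dnew (n + Pdp) = 2 * d n + dnew n + Qdp)
    (hqdn : ∀ n : ℤ, d (n + Pdn) + dnew (n + Pdn) = d n + dnew n + Qdn)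
    (hd : Monotone d) (hdn : Monotone fun n => d n + dnew n)
    (hdp : Monotone fun n => 2 * d n + dnew n)
    (htop : Filter.Tendsto d Filter.atTop Filter.atTop)
    (hbot : Filter.Tendsto (fun n => d n + dnew n) Filter.atBot Filter.atBot)
    (lam : ℕ → ℤ)
    (hlam : ∀ i : ℕ,
      lam i = ((sSup {n : ℤ | d n < (i : ℤ)}
                - sInf {n : ℤ | 2 * (i : ℤ) ≤ 2 * d n + dnew n} + 1)
              - (sSup {n : ℤ | 2 * d n + dnew n + 2 ≤ 2 * (i : ℤ)}
                - sInf {n : ℤ | (i : ℤ) < d n + dnew n} + 1)))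
    (Q : ℤ) (hQ : Q = lcm (lcm Qd Qdp) Qdn) :
    ∀ i : ℕ, (lam (i + Q.toNat) : ℝ)
      = (lam i : ℝ)
        + (Q : ℝ) * ((Pd : ℝ) / (Qd : ℝ) - 4 * (Pdp : ℝ) / (Qdp : ℝ)
            + (Pdn : ℝ) / (Qdn : ℝ)) :=
  stmt19_general d dnew Pd Qd Pdp Qdp Pdn Qdn hQd hQdp hQdn hqd hqdp hqdn hd hdn hdp lam hlam Q hQ
end
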